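/- The marginal density of β given the hierarchical prior β|ξ ~ DE(ξ), ξ ~ Gamma(a, 1/2) equals f(β) = (1 / (2^{(1+a)/2} Γ(a))) · |β|^{(a-1)/2} · K_{1-a}(√(2|β|)), where K_ν is the modified Bessel function of the second kind. -/

import Mathlib

/-!
Substituting `ξ = 2t` turns the mixture integral into
`(4 Γ(a))⁻¹ ∫₀^∞ t^(a-2) exp(-t - |β|/(2t)) dt`, which is the integral defining
`K_{1-a}(x)` at `x = √(2|β|)`, since then `x²/4 = |β|/2`. What remains is to check that
the power prefactors `2^{-(1+a)/2} |β|^{(a-1)/2} · ½ (x/2)^{1-a}` multiply to `1/4`.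
-/

/-- Density of the Laplace (double-exponential) distribution `DE(b)`. -/
noncomputable def laplacePDF (b y : ℝ) : ℝ := (2 * b)⁻¹ * Real.exp (-|y| / b)

/-- Density of the Gamma distribution with shape `a` and rate `1/2`. -/
noncomputable def gammaHalfPDF (a ξ : ℝ) : ℝ :=
  ((1 / 2 : ℝ) ^ a / Real.Gamma a) * ξ ^ (a - 1) * Real.exp (-ξ / 2)

/-- The modified Bessel function of the second kind, via the standard integral
representation. -/
noncomputable def besselK (ν x : ℝ) : ℝ :=
  (1 / 2) * (x / 2) ^ ν * ∫ t in Set.Ioi (0 : ℝ), t ^ (-ν - 1) * Real.exp (-t - x ^ 2 / (4 * t))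

open Real Set MeasureTheory

lemma laplacePDF_mul_gammaHalfPDF (a β : ℝ) {ξ : ℝ} (hξ : 0 < ξ) :
    laplacePDF ξ β * gammaHalfPDF a ξ
      = (8 * Gamma a)⁻¹ * ((ξ / 2) ^ (a - 2) * exp (-(ξ / 2) - |β| / (2 * (ξ / 2)))) := by
  have hpow : ξ ^ (a - 1) = 2 ^ (a - 2) * (ξ / 2) ^ (a - 2) * ξ := by
    rw [div_rpow hξ.le two_pos.le, mul_div_cancel₀ _ (rpow_pos_of_pos two_pos _).ne',
      ← rpow_add_one hξ.ne']
    ring_nf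
  have hhalf : (1 / 2 : ℝ) ^ a * 2 ^ (a - 2) = 1 / 4 := by
    rw [one_div, inv_rpow two_pos.le, rpow_sub two_pos, ← mul_div_assoc,
      inv_mul_cancel₀ (rpow_pos_of_pos two_pos _).ne']
    norm_num
  have hexp : exp (-|β| / ξ) * exp (-ξ / 2) = exp (-(ξ / 2) - |β| / (2 * (ξ / 2))) := by
    rw [← exp_add]
    congr 1
    field_simp
    ring
  unfold laplacePDF gammaHalfPDF
  rw [hpow, ← hexp]
  linear_combination (2⁻¹ * (Gamma a)⁻¹ * (ξ / 2) ^ (a - 2) * exp (-|β| / ξ) * exp (-ξ / 2)) *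
    (ξ⁻¹ * ξ * hhalf + mul_inv_cancel₀ hξ.ne' / 4)

lemma integral_laplacePDF_mul_gammaHalfPDF (a β : ℝ) :
    ∫ ξ in Ioi (0 : ℝ), laplacePDF ξ β * gammaHalfPDF a ξ
      = (4 * Gamma a)⁻¹ * ∫ t in Ioi (0 : ℝ), t ^ (a - 2) * exp (-t - |β| / (2 * t)) := by
  rw [setIntegral_congr_fun measurableSet_Ioi fun ξ hξ => laplacePDF_mul_gammaHalfPDF a β hξ,
    integral_const_mul]
  simp only [div_eq_inv_mul _ (2 : ℝ)]
  rw [integral_comp_mul_left_Ioi (fun t => t ^ (a - 2) * exp (-t - |β| / (2 * t))) 0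
    (inv_pos.2 two_pos)]
  simp only [mul_zero, smul_eq_mul, inv_inv]
  ring

lemma besselK_sqrt_two_mul (ν : ℝ) {c : ℝ} (hc : 0 ≤ c) :
    besselK ν (√(2 * c))
      = 1 / 2 * (c / 2) ^ (ν / 2) * ∫ t in Ioi (0 : ℝ), t ^ (-ν - 1) * exp (-t - c / (2 * t)) := by
  have hsqrt : √(2 * c) / 2 = √(c / 2) := by
    rw [show c / 2 = 2 * c / 2 ^ 2 by ring, sqrt_div' _ (by positivity), sqrt_sq two_pos.le]
  have hsq : ∀ t : ℝ, √(2 * c) ^ 2 / (4 * t) = c / (2 * t) := fun t => by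
    rw [sq_sqrt (by positivity), mul_comm 4 t, mul_comm 2 t, ← div_div, ← div_div]
    ring
  rw [besselK, hsqrt, sqrt_eq_rpow, ← rpow_mul (by positivity), one_div_mul_eq_div 2 ν]
  simp only [hsq]

lemma bessel_prefactor_eq (a G : ℝ) {c : ℝ} (hc : 0 < c) :
    1 / (2 ^ ((1 + a) / 2) * G) * c ^ ((a - 1) / 2) * (1 / 2 * (c / 2) ^ ((1 - a) / 2))
      = (4 * G)⁻¹ := by
  have hc_cancel : c ^ ((a - 1) / 2) * (c / 2) ^ ((1 - a) / 2) = 2 ^ ((a - 1) / 2) := by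
    rw [div_rpow hc.le two_pos.le, mul_div_assoc', ← rpow_add hc,
      show (a - 1) / 2 + (1 - a) / 2 = 0 by ring, rpow_zero, one_div, ← rpow_neg two_pos.le]
    ring_nf
  have htwo : (2 : ℝ) ^ ((a - 1) / 2) / 2 ^ ((1 + a) / 2) = 2⁻¹ := by
    rw [← rpow_sub two_pos, show (a - 1) / 2 - (1 + a) / 2 = -1 by ring, rpow_neg_one]
  calc _ = c ^ ((a - 1) / 2) * (c / 2) ^ ((1 - a) / 2) / 2 ^ ((1 + a) / 2) * (2⁻¹ * G⁻¹) := by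
          ring
    _ = _ := by rw [hc_cancel, htwo]; ring

theorem marginal_density_DL_general (a β : ℝ) (hβ : β ≠ 0) :
    (∫ ξ in Set.Ioi (0 : ℝ), laplacePDF ξ β * gammaHalfPDF a ξ)
      = (1 / ((2 : ℝ) ^ ((1 + a) / 2) * Real.Gamma a)) * |β| ^ ((a - 1) / 2) *
        besselK (1 - a) (Real.sqrt (2 * |β|)) := by
  rw [integral_laplacePDF_mul_gammaHalfPDF, besselK_sqrt_two_mul _ (abs_nonneg β),
    show -(1 - a) - 1 = a - 2 by ring, ← mul_assoc, bessel_prefactor_eq a _ (abs_pos.2 hβ)]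

/-- The marginal density of `β` under `β|ξ ~ DE(ξ)`, `ξ ~ Gamma(a, 1/2)` equals
`(1 / (2^{(1+a)/2} Γ(a))) |β|^{(a-1)/2} K_{1-a}(√(2|β|))`. -/
theorem marginal_density_DL (a β : ℝ) (ha : 0 < a) (hβ : β ≠ 0) :
    (∫ ξ in Set.Ioi (0 : ℝ), laplacePDF ξ β * gammaHalfPDF a ξ)
      = (1 / ((2 : ℝ) ^ ((1 + a) / 2) * Real.Gamma a)) * |β| ^ ((a - 1) / 2) *
        besselK (1 - a) (Real.sqrt (2 * |β|)) :=
  marginal_density_DL_general a β hβ
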